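/- Let θ and A be real 2×2 matrices with Aθ = θA and A ≠ 0, let ξ ∈ ℝ², and let n ∈ ℝ² be nonzero. Let (t,v) ∈ ℝ × ℝ² satisfy F(t,v) = 0, let (a,w) ∈ ℝ × ℝ², and define γ : ℝ → ℝ by γ(s) = F((t,v)·exp_G(s·(a,w))), where the product is taken in G(θ). Then either γ(s) = 0 for all s ∈ ℝ, or there exists δ > 0 such that γ(s) ≠ 0 for all s with 0 < |s| < δ. -/

import Mathlib

/-!
Write `Φ(t,v) = exp(−tθ)(Av + Λ_t ξ)`, so that `F = ⟨Φ, n⟩`. The cocycle rule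
`Λ_{x+y} = Λ_x + exp(xθ)Λ_y`, together with `Aθ = θA`, gives
`F(p·q) = ⟨exp(−q₁θ)Φ(p), n⟩ + F(q)`. Along the one-parameter subgroup `exp_G(s(a,w))` this makes
`γ` differentiable with derivative `s ↦ ⟨exp(−saθ)(Aw + aξ − aθΦ(t,v)), n⟩`, a real-analytic
function, and `γ(0) = F(t,v) = 0`. If the zeros of `γ` accumulated at `0`, Rolle's theorem would
make the zeros of `γ'` accumulate there too; then `γ' ≡ 0` by the identity theorem, and `γ ≡ 0`.
-/

open Matrix

/-- The matrix exponential. -/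
noncomputable def mexp (B : Matrix (Fin 2) (Fin 2) ℝ) : Matrix (Fin 2) (Fin 2) ℝ :=
  NormedSpace.exp B

/-- `Λ^B_t = ∫₀^t exp(sB) ds`, taken entrywise. -/
noncomputable def Lam (B : Matrix (Fin 2) (Fin 2) ℝ) (t : ℝ) : Matrix (Fin 2) (Fin 2) ℝ :=
  Matrix.of fun i j => ∫ s in (0:ℝ)..t, mexp (s • B) i j

/-- The product of the group `G(θ)`:
`(t₁,v₁)·(t₂,v₂) = (t₁+t₂, v₁ + exp(t₁θ)v₂)`. -/
noncomputable def Gmul (θ : Matrix (Fin 2) (Fin 2) ℝ) (x y : ℝ × (Fin 2 → ℝ)) :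
    ℝ × (Fin 2 → ℝ) :=
  (x.1 + y.1, x.2 + mexp (x.1 • θ) *ᵥ y.2)

/-- The group exponential of `G(θ)`. -/
noncomputable def expG (θ : Matrix (Fin 2) (Fin 2) ℝ) (p : ℝ × (Fin 2 → ℝ)) :
    ℝ × (Fin 2 → ℝ) :=
  if p.1 = 0 then (0, p.2) else (p.1, p.1⁻¹ • (Lam θ p.1 *ᵥ p.2))

/-- `F(t,v) = ⟨exp(−tθ)(Av + Λ^θ_t ξ), n⟩`. -/
noncomputable def Fu (θ A : Matrix (Fin 2) (Fin 2) ℝ) (ξ n : Fin 2 → ℝ)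
    (p : ℝ × (Fin 2 → ℝ)) : ℝ :=
  (mexp ((-p.1) • θ) *ᵥ (A *ᵥ p.2 + Lam θ p.1 *ᵥ ξ)) ⬝ᵥ n

open Filter Topology Set

theorem eq_of_forall_hasDerivAt {E : Type*} [NormedAddCommGroup E] [NormedSpace ℝ E]
    {f g f' : ℝ → E} (hf : ∀ x, HasDerivAt f (f' x) x) (hg : ∀ x, HasDerivAt g (f' x) x)
    {x₀ : ℝ} (h : f x₀ = g x₀) : f = g :=
  eq_of_fderiv_eq (fun x => (hf x).differentiableAt) (fun x => (hg x).differentiableAt)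
    (fun x => by rw [(hf x).hasFDerivAt.fderiv, (hg x).hasFDerivAt.fderiv]) x₀ h

theorem frequently_deriv_eq_zero_of_frequently_eq_zero {f f' : ℝ → ℝ} {x₀ : ℝ}
    (hf : ∀ x, HasDerivAt f (f' x) x) (h₀ : f x₀ = 0) (h : ∃ᶠ x in 𝓝[≠] x₀, f x = 0) :
    ∃ᶠ x in 𝓝[≠] x₀, f' x = 0 := by
  rw [Metric.nhdsWithin_basis_ball.frequently_iff] at h ⊢
  intro ε hε
  obtain ⟨x, ⟨hxε, hx₀⟩, hfx⟩ := h ε hε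
  have hsub : uIcc x x₀ ⊆ Metric.ball x₀ ε :=
    (convex_ball x₀ ε).ordConnected.uIcc_subset hxε (Metric.mem_ball_self hε)
  have hcont : Continuous f := continuous_iff_continuousAt.2 fun y => (hf y).continuousAt
  rcases (mem_compl_singleton_iff.1 hx₀).lt_or_gt with hlt | hgt
  · obtain ⟨y, hy, hy'⟩ := exists_hasDerivAt_eq_zero hlt hcont.continuousOn
      (hfx.trans h₀.symm) fun y _ => hf y
    exact ⟨y, ⟨hsub (Icc_subset_uIcc (Ioo_subset_Icc_self hy)), hy.2.ne⟩, hy'⟩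
  · obtain ⟨y, hy, hy'⟩ := exists_hasDerivAt_eq_zero hgt hcont.continuousOn
      (h₀.trans hfx.symm) fun y _ => hf y
    exact ⟨y, ⟨hsub (Icc_subset_uIcc' (Ioo_subset_Icc_self hy)), hy.1.ne'⟩, hy'⟩

theorem eq_zero_or_eventually_ne_zero_of_hasDerivAt {f f' : ℝ → ℝ} {x₀ : ℝ}
    (hf' : AnalyticOnNhd ℝ f' univ) (hf : ∀ x, HasDerivAt f (f' x) x) (h₀ : f x₀ = 0) :
    f = 0 ∨ ∀ᶠ x in 𝓝[≠] x₀, f x ≠ 0 := by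
  refine or_iff_not_imp_right.2 fun hfreq => ?_
  have hf'_zero : EqOn f' 0 univ :=
    hf'.eqOn_zero_of_preconnected_of_frequently_eq_zero isPreconnected_univ (mem_univ x₀)
      (frequently_deriv_eq_zero_of_frequently_eq_zero hf h₀ (by simpa using hfreq))
  funext x
  rw [is_const_of_deriv_eq_zero (fun y => (hf y).differentiableAt)
    (fun y => (hf y).deriv.trans (hf'_zero (mem_univ y))) x x₀, h₀, Pi.zero_apply]

noncomputable def mulVecDotProductCLM {ι κ : Type*} [Fintype ι] [Fintype κ]
    (d : κ → ℝ) (n : ι → ℝ) : Matrix ι κ ℝ →L[ℝ] ℝ :=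
  LinearMap.toContinuousLinearMap
    { toFun := fun M => (M *ᵥ d) ⬝ᵥ n
      map_add' := fun M N => by rw [add_mulVec, add_dotProduct]
      map_smul' := fun c M => by rw [smul_mulVec, smul_dotProduct]; rfl }

section MatrixCalculus

theorem mexp_zero : mexp 0 = 1 :=
  NormedSpace.exp_zero

variable (B : Matrix (Fin 2) (Fin 2) ℝ)

theorem mexp_add_smul (x y : ℝ) : mexp ((x + y) • B) = mexp (x • B) * mexp (y • B) := by
  rw [mexp, mexp, mexp, add_smul]
  exact Matrix.exp_add_of_commute _ _ (((Commute.refl B).smul_left x).smul_right y)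

theorem mexp_neg_smul_mul_mexp_smul (x : ℝ) : mexp ((-x) • B) * mexp (x • B) = 1 := by
  rw [← mexp_add_smul, neg_add_cancel, zero_smul, mexp_zero]

theorem Lam_zero : Lam B 0 = 0 := by
  ext i j
  simp [Lam]

theorem Commute.mexp_smul_right {A : Matrix (Fin 2) (Fin 2) ℝ} (h : Commute A B) (x : ℝ) :
    Commute A (mexp (x • B)) :=
  (h.smul_right x).exp_right

-- Matrices carry no global norm; the ℓ∞ operator norm is used here only to do calculus.
attribute [local instance] Matrix.linftyOpNormedAddCommGroup Matrix.linftyOpNormedSpace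
  Matrix.linftyOpNormedRing Matrix.linftyOpNormedAlgebra

theorem hasDerivAt_mexp_smul (x : ℝ) :
    HasDerivAt (fun u : ℝ => mexp (u • B)) (mexp (x • B) * B) x :=
  hasDerivAt_exp_smul_const B x

theorem continuous_mexp_smul : Continuous fun u : ℝ => mexp (u • B) :=
  continuous_iff_continuousAt.2 fun x => (hasDerivAt_mexp_smul B x).continuousAt

theorem Lam_eq_integral (t : ℝ) : Lam B t = ∫ s in (0 : ℝ)..t, mexp (s • B) := by
  ext i j
  let entry : Matrix (Fin 2) (Fin 2) ℝ →L[ℝ] ℝ :=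
    LinearMap.toContinuousLinearMap (Matrix.entryLinearMap ℝ ℝ i j)
  exact entry.intervalIntegral_comp_comm ((continuous_mexp_smul B).intervalIntegrable 0 t)

theorem hasDerivAt_Lam (t : ℝ) : HasDerivAt (Lam B) (mexp (t • B)) t := by
  rw [show Lam B = fun t => ∫ s in (0 : ℝ)..t, mexp (s • B) from funext (Lam_eq_integral B)]
  exact (continuous_mexp_smul B).integral_hasStrictDerivAt 0 t |>.hasDerivAt

theorem Lam_add (x y : ℝ) : Lam B (x + y) = Lam B x + mexp (x • B) * Lam B y := by
  refine congrFun (eq_of_forall_hasDerivAt (f' := fun y => mexp ((x + y) • B))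
    (g := fun y => Lam B x + mexp (x • B) * Lam B y)
    (fun y => (hasDerivAt_Lam B (x + y)).comp_const_add x y) (fun y => ?_) (x₀ := 0) ?_) y
  · rw [mexp_add_smul]
    exact ((hasDerivAt_Lam B y).const_mul _).const_add _
  · simp [Lam_zero]

theorem Commute.Lam_right {A : Matrix (Fin 2) (Fin 2) ℝ} (h : Commute A B) (x : ℝ) :
    Commute A (Lam B x) := by
  refine congrFun (eq_of_forall_hasDerivAt (f' := fun x => A * mexp (x • B))
    (g := fun x => Lam B x * A)
    (fun x => (hasDerivAt_Lam B x).const_mul A) (fun x => ?_) (x₀ := 0) ?_) x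
  · rw [(h.mexp_smul_right B x).eq]
    exact (hasDerivAt_Lam B x).mul_const A
  · simp [Lam_zero]

theorem mul_Lam (x : ℝ) : B * Lam B x = mexp (x • B) - 1 := by
  refine congrFun (eq_of_forall_hasDerivAt (f' := fun x => B * mexp (x • B))
    (g := fun x => mexp (x • B) - 1)
    (fun x => (hasDerivAt_Lam B x).const_mul B) (fun x => ?_) (x₀ := 0) ?_) x
  · exact (hasDerivAt_exp_smul_const' B x).sub_const 1
  · simp [Lam_zero, mexp]

theorem hasDerivAt_mexp_neg_smul_mul_Lam (x : ℝ) :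
    HasDerivAt (fun u : ℝ => mexp ((-u) • B) * Lam B u) (mexp ((-x) • B)) x := by
  have hexp : HasDerivAt (fun u : ℝ => mexp ((-u) • B)) (mexp ((-x) • B) * -B) x := by
    simpa only [neg_smul, smul_neg] using hasDerivAt_mexp_smul (-B) x
  refine (hexp.mul (hasDerivAt_Lam B x)).congr_deriv ?_
  rw [mul_neg, neg_mul, mul_assoc, mul_Lam, mul_sub, mexp_neg_smul_mul_mexp_smul, mul_one]
  abel

theorem HasDerivAt.mulVec_dotProduct {ι κ : Type*} [Fintype ι] [Fintype κ]
    {M : ℝ → Matrix ι κ ℝ} {M' : Matrix ι κ ℝ} {x : ℝ} (h : HasDerivAt M M' x)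
    (d : κ → ℝ) (n : ι → ℝ) : HasDerivAt (fun s => (M s *ᵥ d) ⬝ᵥ n) ((M' *ᵥ d) ⬝ᵥ n) x :=
  (mulVecDotProductCLM d n).hasFDerivAt.comp_hasDerivAt (f := M) x h

theorem analyticOnNhd_mexp_smul_mulVec_dotProduct (d n : Fin 2 → ℝ) :
    AnalyticOnNhd ℝ (fun s : ℝ => (mexp (s • B) *ᵥ d) ⬝ᵥ n) univ := by
  intro x _
  have hexp : AnalyticAt ℝ (NormedSpace.exp : Matrix (Fin 2) (Fin 2) ℝ → _) (x • B) :=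
    NormedSpace.analyticAt_exp_of_mem_ball _ (by simp [NormedSpace.expSeries_radius_eq_top])
  have hsmul : AnalyticAt ℝ (fun s : ℝ => s • B) x :=
    ((ContinuousLinearMap.id ℝ ℝ).smulRight B).analyticAt x
  exact (mulVecDotProductCLM d n).analyticAt _ |>.comp <| hexp.comp (f := fun s : ℝ => s • B) hsmul

end MatrixCalculus

section GroupG

variable {θ A : Matrix (Fin 2) (Fin 2) ℝ} {ξ n : Fin 2 → ℝ}

theorem expG_fst (θ : Matrix (Fin 2) (Fin 2) ℝ) (p : ℝ × (Fin 2 → ℝ)) : (expG θ p).1 = p.1 := by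
  unfold expG
  split_ifs with h <;> simp [h]

theorem Fu_Gmul (hcomm : Commute A θ) (p q : ℝ × (Fin 2 → ℝ)) :
    Fu θ A ξ n (Gmul θ p q) =
      (mexp ((-q.1) • θ) *ᵥ (mexp ((-p.1) • θ) *ᵥ (A *ᵥ p.2 + Lam θ p.1 *ᵥ ξ))) ⬝ᵥ n +
        Fu θ A ξ n q := by
  obtain ⟨x, v⟩ := p
  obtain ⟨y, z⟩ := q
  have hsplit : mexp ((-(x + y)) • θ) = mexp ((-y) • θ) * mexp ((-x) • θ) := by
    rw [← mexp_add_smul, neg_add, add_comm]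
  have hinner : A *ᵥ (v + mexp (x • θ) *ᵥ z) + Lam θ (x + y) *ᵥ ξ =
      (A *ᵥ v + Lam θ x *ᵥ ξ) + mexp (x • θ) *ᵥ (A *ᵥ z + Lam θ y *ᵥ ξ) := by
    rw [mulVec_add, mulVec_mulVec, (hcomm.mexp_smul_right θ x).eq, Lam_add, add_mulVec,
      mulVec_add, ← mulVec_mulVec, ← mulVec_mulVec]
    abel
  simp only [Fu, Gmul]
  rw [hinner, hsplit, ← mulVec_mulVec, mulVec_add (mexp ((-x) • θ)),
    mulVec_mulVec _ (mexp ((-x) • θ)) (mexp (x • θ)), mexp_neg_smul_mul_mexp_smul, one_mulVec,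
    mulVec_add, add_dotProduct]

theorem Fu_expG_smul_zero_fst (w : Fin 2 → ℝ) (s : ℝ) :
    Fu θ A ξ n (expG θ (s • (0, w))) = s * ((A *ᵥ w) ⬝ᵥ n) := by
  simp only [Fu, expG, Prod.smul_mk, smul_eq_mul, mul_zero, ↓reduceIte, neg_zero, zero_smul,
    mexp_zero, one_mulVec, Lam_zero, zero_mulVec, add_zero, mulVec_smul, smul_dotProduct]

theorem expG_smul {a : ℝ} (ha : a ≠ 0) (w : Fin 2 → ℝ) (s : ℝ) :
    expG θ (s • (a, w)) = (s * a, a⁻¹ • (Lam θ (s * a) *ᵥ w)) := by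
  rcases eq_or_ne s 0 with rfl | hs
  · simp [expG, Lam_zero]
  · simp only [expG, Prod.smul_mk, smul_eq_mul, mul_ne_zero hs ha, ↓reduceIte, mulVec_smul,
      smul_smul]
    congr 2
    field_simp

theorem Fu_expG_smul (hcomm : Commute A θ) {a : ℝ} (ha : a ≠ 0) (w : Fin 2 → ℝ) (s : ℝ) :
    Fu θ A ξ n (expG θ (s • (a, w))) =
      ((mexp ((-(s * a)) • θ) * Lam θ (s * a)) *ᵥ (a⁻¹ • (A *ᵥ w) + ξ)) ⬝ᵥ n := by
  have hinner : A *ᵥ (a⁻¹ • (Lam θ (s * a) *ᵥ w)) + Lam θ (s * a) *ᵥ ξ =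
      Lam θ (s * a) *ᵥ (a⁻¹ • (A *ᵥ w) + ξ) := by
    rw [mulVec_smul, mulVec_mulVec, (hcomm.Lam_right θ _).eq, ← mulVec_mulVec, ← mulVec_smul,
      ← mulVec_add]
  simp only [Fu, expG_smul ha]
  rw [hinner, mulVec_mulVec]

theorem hasDerivAt_Fu_expG_smul (hcomm : Commute A θ) (a : ℝ) (w : Fin 2 → ℝ) (s : ℝ) :
    HasDerivAt (fun s : ℝ => Fu θ A ξ n (expG θ (s • (a, w))))
      ((mexp (s • -(a • θ)) *ᵥ (A *ᵥ w + a • ξ)) ⬝ᵥ n) s := by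
  rcases eq_or_ne a 0 with rfl | ha
  · simp only [Fu_expG_smul_zero_fst, zero_smul, neg_zero, smul_zero, mexp_zero, one_mulVec,
      add_zero]
    exact hasDerivAt_mul_const _
  · simp only [Fu_expG_smul hcomm ha]
    refine (((hasDerivAt_mexp_neg_smul_mul_Lam θ (s * a)).mulVec_dotProduct _ n).comp s
      (hasDerivAt_mul_const a)).congr_deriv ?_
    rw [show (-(s * a)) • θ = s • -(a • θ) by rw [smul_neg, smul_smul, neg_smul], mul_comm,
      ← smul_eq_mul, ← smul_dotProduct, ← mulVec_smul, smul_add, smul_smul, mul_inv_cancel₀ ha,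
      one_smul]

end GroupG

theorem stmt16_general (θ A : Matrix (Fin 2) (Fin 2) ℝ) (hcomm : A * θ = θ * A)
    (ξ n : Fin 2 → ℝ)
    (t : ℝ) (v : Fin 2 → ℝ) (hZ : Fu θ A ξ n (t, v) = 0)
    (a : ℝ) (w : Fin 2 → ℝ) (γ : ℝ → ℝ)
    (hγ : ∀ s : ℝ, γ s = Fu θ A ξ n (Gmul θ (t, v) (expG θ (s • ((a, w) : ℝ × (Fin 2 → ℝ)))))) :
    (∀ s : ℝ, γ s = 0) ∨
      ∃ δ > 0, ∀ s : ℝ, s ≠ 0 → |s| < δ → γ s ≠ 0 := by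
  set c := mexp ((-t) • θ) *ᵥ (A *ᵥ v + Lam θ t *ᵥ ξ)
  set C := -(a • θ)
  have hγ_eq : γ = fun s => (mexp (s • C) *ᵥ c) ⬝ᵥ n + Fu θ A ξ n (expG θ (s • (a, w))) := by
    funext s
    rw [hγ, Fu_Gmul hcomm, expG_fst, Prod.smul_fst, smul_eq_mul, smul_neg, smul_smul, ← neg_smul]
  have hγ' : ∀ s, HasDerivAt γ ((mexp (s • C) *ᵥ (C *ᵥ c + (A *ᵥ w + a • ξ))) ⬝ᵥ n) s := by
    intro s
    rw [hγ_eq, mulVec_add, add_dotProduct, mulVec_mulVec]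
    exact ((hasDerivAt_mexp_smul C s).mulVec_dotProduct c n).add
      (hasDerivAt_Fu_expG_smul hcomm a w s)
  have hγ0 : γ 0 = 0 := by simpa [hγ, expG, Gmul] using hZ
  rcases eq_zero_or_eventually_ne_zero_of_hasDerivAt
    (analyticOnNhd_mexp_smul_mulVec_dotProduct C _ n) hγ' hγ0 with h | h
  · exact Or.inl (congrFun h)
  · obtain ⟨δ, hδ, hne⟩ := Metric.eventually_nhds_iff.1 (eventually_nhdsWithin_iff.1 h)
    exact Or.inr ⟨δ, hδ, fun s hs hsδ => hne (by rwa [Real.dist_0_eq_abs]) hs⟩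

theorem stmt16 (θ A : Matrix (Fin 2) (Fin 2) ℝ) (hcomm : A * θ = θ * A) (hA : A ≠ 0)
    (ξ n : Fin 2 → ℝ) (hn : n ≠ 0)
    (t : ℝ) (v : Fin 2 → ℝ) (hZ : Fu θ A ξ n (t, v) = 0)
    (a : ℝ) (w : Fin 2 → ℝ) (γ : ℝ → ℝ)
    (hγ : ∀ s : ℝ, γ s = Fu θ A ξ n (Gmul θ (t, v) (expG θ (s • ((a, w) : ℝ × (Fin 2 → ℝ)))))) :
    (∀ s : ℝ, γ s = 0) ∨
      ∃ δ > 0, ∀ s : ℝ, s ≠ 0 → |s| < δ → γ s ≠ 0 :=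
  stmt16_general θ A hcomm ξ n t v hZ a w γ hγ
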